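/- Let u_R : ℝ → ℝ^m and u_L : ℝ → ℝ^n be differentiable curves with ‖u_R(t)‖ = ‖u_L(t)‖ = 1, and let γ : ℝ → ℝ be differentiable. Define w : ℝ → ℝ^{m+n} by w = (u_R·sin γ, u_L·cos γ). Then ‖w(t)‖ = 1 and ‖ẇ‖² = γ̇² + ‖u̇_R‖² sin²γ + ‖u̇_L‖² cos²γ. -/

import Mathlib

/-!
Split `ℝ^(m+n)` as `ℝ^m × ℝ^n`, where the squared norm is additive, so that `w` becomes
`(sin γ • u_R, cos γ • u_L)`. For a unit curve `a` we have `⟪a, a'⟫ = 0`, hence the two terms of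
`(f • a)' = f' • a + f • a'` are orthogonal and `‖(f • a)'‖² = f'² + f² ‖a'‖²`. Applied to both
halves, the cross terms in `γ'` combine through `sin² γ + cos² γ = 1`.
-/

open scoped RealInnerProductSpace

section
variable {E : Type*} [NormedAddCommGroup E] [InnerProductSpace ℝ E]

theorem inner_deriv_eq_zero_of_norm_eq_const {u : ℝ → E} {r : ℝ} {t : ℝ}
    (hu : DifferentiableAt ℝ u t) (hr : ∀ s, ‖u s‖ = r) : ⟪u t, deriv u t⟫ = 0 := by
  have hconst : HasDerivAt (fun s => ⟪u s, u s⟫) 0 t := by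
    simpa [real_inner_self_eq_norm_sq, hr] using hasDerivAt_const t (r ^ 2)
  have hzero := hconst.unique (hu.hasDerivAt.inner ℝ hu.hasDerivAt)
  rw [real_inner_comm (u t)] at hzero
  linarith

theorem norm_deriv_smul_sq_of_norm_eq_one {f : ℝ → ℝ} {a : ℝ → E} {t : ℝ}
    (hf : DifferentiableAt ℝ f t) (ha : DifferentiableAt ℝ a t) (ha1 : ∀ s, ‖a s‖ = 1) :
    ‖deriv (fun s => f s • a s) t‖ ^ 2 = deriv f t ^ 2 + f t ^ 2 * ‖deriv a t‖ ^ 2 := by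
  rw [(hf.hasDerivAt.fun_smul ha.hasDerivAt).deriv, add_comm, norm_add_sq_real, inner_smul_left,
    inner_smul_right, inner_deriv_eq_zero_of_norm_eq_const ha ha1, norm_smul, norm_smul, ha1]
  simp only [Real.norm_eq_abs, mul_pow, sq_abs]
  ring
end

theorem EuclideanSpace.norm_sq_eq_finAddEquivProd {m n : ℕ} (x : EuclideanSpace ℝ (Fin (m + n))) :
    ‖x‖ ^ 2 = ‖(EuclideanSpace.finAddEquivProd x).1‖ ^ 2
      + ‖(EuclideanSpace.finAddEquivProd x).2‖ ^ 2 := by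
  simp [EuclideanSpace.real_norm_sq_eq, Fin.sum_univ_add]

theorem tree_step_join_branches
    (m n : ℕ)
    (uR : ℝ → EuclideanSpace ℝ (Fin m)) (uL : ℝ → EuclideanSpace ℝ (Fin n))
    (huR : Differentiable ℝ uR) (huL : Differentiable ℝ uL)
    (huRnorm : ∀ t, ‖uR t‖ = 1) (huLnorm : ∀ t, ‖uL t‖ = 1)
    (γ : ℝ → ℝ) (hγ : Differentiable ℝ γ)
    (w : ℝ → EuclideanSpace ℝ (Fin (m + n)))
    (hwR : ∀ t (i : Fin m), w t (Fin.castAdd n i) = Real.sin (γ t) * uR t i)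
    (hwL : ∀ t (j : Fin n), w t (Fin.natAdd m j) = Real.cos (γ t) * uL t j) :
    ∀ t, ‖w t‖ = 1 ∧
      ‖deriv w t‖^2 = (deriv γ t)^2 + ‖deriv uR t‖^2 * Real.sin (γ t)^2
        + ‖deriv uL t‖^2 * Real.cos (γ t)^2 := by
  set e := EuclideanSpace.finAddEquivProd (𝕜 := ℝ) (n := m) (m := n)
  set sR := fun t => Real.sin (γ t) • uR t
  set cL := fun t => Real.cos (γ t) • uL t
  have he : ∀ t, e (w t) = (sR t, cL t) := by
    intro t
    ext i <;> simp [sR, cL, e, hwR, hwL]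
  have hw : w = e.symm ∘ fun t => (sR t, cL t) := funext fun t => e.eq_symm_apply.2 (he t)
  intro t
  have hsR : DifferentiableAt ℝ sR t := (hγ t).sin.smul (huR t)
  have hcL : DifferentiableAt ℝ cL t := (hγ t).cos.smul (huL t)
  have hderiv : e (deriv w t) = (deriv sR t, deriv cL t) := by
    rw [hw, (e.symm.hasFDerivAt.comp_hasDerivAt t (hsR.hasDerivAt.prodMk hcL.hasDerivAt)).deriv]
    exact e.apply_symm_apply _
  constructor
  · refine (pow_eq_one_iff_of_nonneg (norm_nonneg _) two_ne_zero).1 ?_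
    rw [EuclideanSpace.norm_sq_eq_finAddEquivProd, he t, norm_smul, norm_smul, huRnorm, huLnorm]
    simp only [Real.norm_eq_abs, mul_one, sq_abs, Real.sin_sq_add_cos_sq]
  · rw [EuclideanSpace.norm_sq_eq_finAddEquivProd, hderiv,
      norm_deriv_smul_sq_of_norm_eq_one (hγ t).sin (huR t) huRnorm,
      norm_deriv_smul_sq_of_norm_eq_one (hγ t).cos (huL t) huLnorm,
      ((hγ t).hasDerivAt.sin).deriv, ((hγ t).hasDerivAt.cos).deriv]
    linear_combination (deriv γ t) ^ 2 * Real.sin_sq_add_cos_sq (γ t)
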